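/- Run Algorithm 1 started at any x_0 ∈ ℝ with the parameter sequence t̃_k = (k+2)/2, producing iterates (x_k). Then f(x_k) → f* as k → ∞; that is, the function values of the gradient-restarted accelerated gradient method converge to the minimum value of f. -/

import Mathlib

/-!
The energy `f(x_{k+1}) + L/2 (x_{k+1} - x_k)²` is nonincreasing, because the fundamental
inequality of the gradient step gives `f(x_{k+2}) + L/2 (x_{k+2} - x_{k+1})² ≤
f(x_{k+1}) + L/2 (y_{k+1} - x_{k+1})²` and the momentum coefficient lies in `[0, 1]`; at a restart
`y_{k+1} = x_{k+1}`, so the energy drops by `L/2 (x_{k+1} - x_k)²`. In one dimension a restart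
forces `f'` to change sign between `x_k` and `x_{k+1}`, so a minimizer lies between them and
`f(x_{k+1}) - f* ≤ L (x_{k+1} - x_k)²`. Hence, if restarts occur infinitely often, the energy
converges to `f*`. Otherwise the iteration is eventually FISTA with parameters `t_N + j/2`, and the
Beck–Teboulle potential gives `f(x_k) - f* = O(1/k²)`.
-/

open Filter Finset

/-- The gradient step operator `T(y) = y - (1/L) f'(y)`. -/
noncomputable def gradStep (L : ℝ) (f : ℝ → ℝ) (y : ℝ) : ℝ := y - (1 / L) * deriv f y

/-- A parameter sequence for accelerated gradient descent:
`t 0 = 1`, `t k ≥ (k+2)/2` and `t k ^ 2 ≥ t (k+1) ^ 2 - t (k+1)`. -/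
def ParamSeq (t : ℕ → ℝ) : Prop :=
  t 0 = 1 ∧ ∀ k : ℕ, ((k : ℝ) + 2) / 2 ≤ t k ∧ (t (k + 1)) ^ 2 - t (k + 1) ≤ (t k) ^ 2

/-- The gradient restart condition `f'(y_k) (x_{k+1} - x_k) > 0` at iteration `k`. -/
def RestartAt (f : ℝ → ℝ) (x y : ℕ → ℝ) (k : ℕ) : Prop :=
  0 < deriv f (y k) * (x (k + 1) - x k)

/-- `IsAlgo1 L f tt x0 x y t` : the sequences `x`, `y`, `t` are generated by Algorithm 1
(AGD with gradient restarts) with parameter sequence `tt`, started at `x0`.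
The counter `c` keeps track of the position in the parameter sequence; it is reset to `0`
whenever the gradient restart condition is triggered, which realizes the reset
`t_{k+1+m} := tt_m` of the parameters. -/
def IsAlgo1 (L : ℝ) (f : ℝ → ℝ) (tt : ℕ → ℝ) (x0 : ℝ) (x y t : ℕ → ℝ) : Prop :=
  x 0 = x0 ∧ y 0 = x0 ∧
  (∀ k, x (k + 1) = gradStep L f (y k)) ∧
  ∃ c : ℕ → ℕ, c 0 = 0 ∧ (∀ k, t k = tt (c k)) ∧
    ∀ k,
      (deriv f (y k) * (x (k + 1) - x k) ≤ 0 →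
        y (k + 1) = x (k + 1) + ((t k - 1) / t (k + 1)) * (x (k + 1) - x k) ∧
          c (k + 1) = c k + 1) ∧
      (0 < deriv f (y k) * (x (k + 1) - x k) →
        y (k + 1) = x (k + 1) ∧ c (k + 1) = 0)

open Topology

section SmoothConvex

variable {L : ℝ} {f : ℝ → ℝ}

theorem ConvexOn.add_deriv_mul_sub_le (hconv : ConvexOn ℝ Set.univ f)
    (hdiff : Differentiable ℝ f) (p q : ℝ) : f p + deriv f p * (q - p) ≤ f q := by
  rcases lt_trichotomy p q with hpq | rfl | hqp
  · have h := hconv.deriv_le_slope (Set.mem_univ p) (Set.mem_univ q) hpq (hdiff p)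
    rw [slope_def_field, le_div_iff₀ (sub_pos.2 hpq)] at h
    linarith
  · simp
  · have h := hconv.slope_le_deriv (Set.mem_univ q) (Set.mem_univ p) hqp (hdiff p)
    rw [slope_def_field, div_le_iff₀ (sub_pos.2 hqp)] at h
    linarith

theorem continuous_deriv_of_abs_sub_le
    (hlip : ∀ a b : ℝ, |deriv f a - deriv f b| ≤ L * |a - b|) : Continuous (deriv f) :=
  LipschitzWith.continuous (K := L.toNNReal) <| lipschitzWith_iff_dist_le_mul.2 fun a b =>
    (hlip a b).trans (mul_le_mul_of_nonneg_right (Real.le_coe_toNNReal L) (abs_nonneg _))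

theorem monotone_const_mul_sub_deriv
    (hlip : ∀ a b : ℝ, |deriv f a - deriv f b| ≤ L * |a - b|) :
    Monotone fun s => L * s - deriv f s := by
  intro a b hab
  have h := hlip b a
  rw [abs_of_nonneg (sub_nonneg.2 hab)] at h
  linarith [le_abs_self (deriv f b - deriv f a)]

/-- The descent lemma: `L s² / 2 - f s` is convex, so it lies above its tangent lines. -/
theorem le_add_deriv_mul_sub_add_sq (hdiff : Differentiable ℝ f)
    (hlip : ∀ a b : ℝ, |deriv f a - deriv f b| ≤ L * |a - b|) (a b : ℝ) :
    f b ≤ f a + deriv f a * (b - a) + L / 2 * (b - a) ^ 2 := by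
  set h : ℝ → ℝ := fun s => L / 2 * s ^ 2 - f s
  have hh : ∀ s, HasDerivAt h (L * s - deriv f s) s := fun s =>
    (((hasDerivAt_pow 2 s).const_mul (L / 2)).sub (hdiff s).hasDerivAt).congr_deriv
      (by push_cast; ring)
  have hderiv : deriv h = fun s => L * s - deriv f s := funext fun s => (hh s).deriv
  have hdiffh : Differentiable ℝ h := fun s => (hh s).differentiableAt
  have hconv : ConvexOn ℝ Set.univ h :=
    (hderiv ▸ monotone_const_mul_sub_deriv hlip).convexOn_univ_of_deriv hdiffh
  have := hconv.add_deriv_mul_sub_le hdiffh a b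
  simp only [h, hderiv] at this
  linear_combination this

theorem deriv_eq_mul_sub_gradStep (hL : L ≠ 0) (y : ℝ) :
    deriv f y = L * (y - gradStep L f y) := by
  unfold gradStep
  field_simp
  ring

theorem gradStep_add_sq_le (hL : 0 < L) (hconv : ConvexOn ℝ Set.univ f)
    (hdiff : Differentiable ℝ f) (hlip : ∀ a b : ℝ, |deriv f a - deriv f b| ≤ L * |a - b|)
    (y u : ℝ) :
    f (gradStep L f y) + L / 2 * (gradStep L f y - u) ^ 2 ≤ f u + L / 2 * (y - u) ^ 2 := by
  have hdescent := le_add_deriv_mul_sub_add_sq hdiff hlip y (gradStep L f y)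
  have hsupport := hconv.add_deriv_mul_sub_le hdiff y u
  rw [deriv_eq_mul_sub_gradStep hL.ne'] at hdescent hsupport
  linear_combination hdescent + hsupport

/-- A gradient step never jumps past a zero of `f'`. -/
theorem mul_deriv_gradStep_nonpos (hL : 0 < L)
    (hlip : ∀ a b : ℝ, |deriv f a - deriv f b| ≤ L * |a - b|) {c y : ℝ}
    (h : c * deriv f y ≤ 0) : c * deriv f (gradStep L f y) ≤ 0 := by
  have hstep : |deriv f (gradStep L f y) - deriv f y| ≤ |deriv f y| := by
    calc |deriv f (gradStep L f y) - deriv f y| ≤ L * |gradStep L f y - y| := hlip _ _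
      _ = |deriv f y| := by
        rw [deriv_eq_mul_sub_gradStep hL.ne', abs_mul, abs_of_pos hL, abs_sub_comm]
  calc c * deriv f (gradStep L f y)
      = c * deriv f y + c * (deriv f (gradStep L f y) - deriv f y) := by ring
    _ ≤ c * deriv f y + |c| * |deriv f y| := by
      grw [← hstep, ← abs_mul, ← le_abs_self]
    _ = 0 := by rw [← abs_mul, abs_of_nonpos h, add_neg_cancel]

theorem zero_mem_uIcc_of_mul_nonpos {a b : ℝ} (h : a * b ≤ 0) : (0 : ℝ) ∈ Set.uIcc a b := by
  rw [Set.mem_uIcc]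
  rcases le_total a 0 with ha | ha <;> rcases le_total b 0 with hb | hb
  all_goals first
    | exact Or.inl ⟨ha, hb⟩
    | exact Or.inr ⟨hb, ha⟩
    | rcases mul_eq_zero.1 (le_antisymm h (by nlinarith)) with rfl | rfl <;> simp [*]

theorem sub_le_mul_sq_of_deriv_mul_deriv_nonpos (hL : 0 ≤ L) (hconv : ConvexOn ℝ Set.univ f)
    (hdiff : Differentiable ℝ f) (hlip : ∀ a b : ℝ, |deriv f a - deriv f b| ≤ L * |a - b|)
    {a b u : ℝ} (hab : deriv f a * deriv f b ≤ 0) : f b - f u ≤ L * (b - a) ^ 2 := by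
  obtain ⟨ξ, hξ, hξ0⟩ := intermediate_value_uIcc
    (continuous_deriv_of_abs_sub_le hlip).continuousOn (zero_mem_uIcc_of_mul_nonpos hab)
  have hξu : f ξ ≤ f u := by simpa [hξ0] using hconv.add_deriv_mul_sub_le hdiff ξ u
  have hbξ := hconv.add_deriv_mul_sub_le hdiff b ξ
  calc f b - f u ≤ (deriv f b - deriv f ξ) * (b - ξ) := by rw [hξ0]; linarith
    _ ≤ |deriv f b - deriv f ξ| * |b - ξ| := by rw [← abs_mul]; exact le_abs_self _
    _ ≤ L * |b - ξ| * |b - ξ| := by gcongr; exact hlip b ξ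
    _ ≤ L * |b - a| * |b - a| := by
      have := Set.abs_sub_right_of_mem_uIcc hξ
      gcongr
    _ = L * (b - a) ^ 2 := by rw [mul_assoc, abs_mul_abs_self, sq]

end SmoothConvex

section Restart

variable {L : ℝ} {f : ℝ → ℝ}

/-- The restart condition forces `f'(y₁)` to have the sign of `x₁ - x₀`, hence the sign
opposite to `f'(y₀)`; as gradient steps preserve the sign of `f'`, so do `f'(x₁)` and
`f'(x₂)`. -/
theorem deriv_mul_deriv_nonpos_of_restart (hL : 0 < L)
    (hlip : ∀ a b : ℝ, |deriv f a - deriv f b| ≤ L * |a - b|) {x₀ y₀ y₁ β : ℝ}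
    (hβ : 0 ≤ β) (hy₁ : y₁ = gradStep L f y₀ + β * (gradStep L f y₀ - x₀))
    (hprev : deriv f y₀ * (gradStep L f y₀ - x₀) ≤ 0)
    (hrestart : 0 < deriv f y₁ * (gradStep L f y₁ - gradStep L f y₀)) :
    deriv f (gradStep L f y₀) * deriv f (gradStep L f y₁) ≤ 0 := by
  have hg := deriv_eq_mul_sub_gradStep (f := f) hL.ne' y₁
  set x₁ := gradStep L f y₀
  set x₂ := gradStep L f y₁
  set g := deriv f y₁
  set d := x₁ - x₀
  have hgd : 0 < g * d := by
    have hsplit : g * (x₂ - x₁) = -(L * (y₁ - x₂) ^ 2) + β * (g * d) := by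
      rw [hg]; linear_combination L * (y₁ - x₂) * hy₁
    have : 0 < β * (g * d) := by nlinarith [mul_nonneg hL.le (sq_nonneg (y₁ - x₂))]
    exact pos_of_mul_pos_right this hβ
  have hgg₀ : g * deriv f y₀ ≤ 0 := by
    have : g * deriv f y₀ * (d * d) ≤ 0 := by
      nlinarith [mul_nonpos_of_nonneg_of_nonpos hgd.le hprev]
    have hd : 0 < d * d := mul_self_pos.2 (right_ne_zero_of_mul hgd.ne')
    exact nonpos_of_mul_nonpos_left this hd
  have h₁ : g * deriv f (gradStep L f y₀) ≤ 0 := mul_deriv_gradStep_nonpos hL hlip hgg₀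
  have h₂ : -g * deriv f (gradStep L f y₁) ≤ 0 :=
    mul_deriv_gradStep_nonpos hL hlip (by nlinarith [sq_nonneg g])
  have hg0 : 0 < g * g := mul_self_pos.2 (left_ne_zero_of_mul hgd.ne')
  nlinarith

end Restart

section Fista

variable {L : ℝ} {f : ℝ → ℝ}

/-- The Beck–Teboulle Lyapunov function of FISTA with parameters `τ`. -/
def fistaPotential (L : ℝ) (f : ℝ → ℝ) (u : ℝ) (x τ : ℕ → ℝ) (j : ℕ) : ℝ :=
  2 * τ j ^ 2 * (f (x (j + 1)) - f u) + L * (τ j * x (j + 1) - (τ j - 1) * x j - u) ^ 2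

/-- The fundamental inequality at `u` and at `x`, weighted by `τ` and `τ² - τ`; the terms
`(τ - 1) (x - u)²` produced by completing the square cancel. -/
theorem fista_step
    (hfund : ∀ y u, f (gradStep L f y) + L / 2 * (gradStep L f y - u) ^ 2 ≤
      f u + L / 2 * (y - u) ^ 2)
    {τ : ℝ} (hτ : 1 ≤ τ) (x y u : ℝ) :
    2 * τ ^ 2 * (f (gradStep L f y) - f u) + L * (τ * gradStep L f y - (τ - 1) * x - u) ^ 2 ≤
      2 * (τ ^ 2 - τ) * (f x - f u) + L * (τ * y - (τ - 1) * x - u) ^ 2 := by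
  have hx := mul_le_mul_of_nonneg_left (hfund y x) (by nlinarith : 0 ≤ 2 * (τ ^ 2 - τ))
  have hu := mul_le_mul_of_nonneg_left (hfund y u) (by linarith : 0 ≤ 2 * τ)
  linear_combination hx + hu

theorem antitone_fistaPotential
    (hfund : ∀ y u, f (gradStep L f y) + L / 2 * (gradStep L f y - u) ^ 2 ≤
      f u + L / 2 * (y - u) ^ 2)
    {u : ℝ} (hu : ∀ z, f u ≤ f z) {x y τ : ℕ → ℝ} (hτ : ∀ j, 1 ≤ τ j)
    (hτsq : ∀ j, τ (j + 1) ^ 2 - τ (j + 1) ≤ τ j ^ 2)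
    (hx : ∀ j, x (j + 1) = gradStep L f (y j))
    (hy : ∀ j, y (j + 1) = x (j + 1) + (τ j - 1) / τ (j + 1) * (x (j + 1) - x j)) :
    Antitone (fistaPotential L f u x τ) := by
  refine antitone_nat_of_succ_le fun j => ?_
  have hstep := fista_step hfund (hτ (j + 1)) (x (j + 1)) (y (j + 1)) u
  have hmomentum : τ (j + 1) * y (j + 1) - (τ (j + 1) - 1) * x (j + 1) - u =
      τ j * x (j + 1) - (τ j - 1) * x j - u := by
    have := (zero_lt_one.trans_le (hτ (j + 1))).ne'
    rw [hy j]
    field_simp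
    ring
  have hweights := mul_le_mul_of_nonneg_right (hτsq j) (sub_nonneg.2 (hu (x (j + 1))))
  rw [← hx, hmomentum] at hstep
  unfold fistaPotential
  linarith

theorem tendsto_of_fista (hL : 0 ≤ L)
    (hfund : ∀ y u, f (gradStep L f y) + L / 2 * (gradStep L f y - u) ^ 2 ≤
      f u + L / 2 * (y - u) ^ 2)
    {u : ℝ} (hu : ∀ z, f u ≤ f z) {x y τ : ℕ → ℝ} (hτ : ∀ j, 1 ≤ τ j)
    (hτsq : ∀ j, τ (j + 1) ^ 2 - τ (j + 1) ≤ τ j ^ 2) (hτ_top : Tendsto τ atTop atTop)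
    (hx : ∀ j, x (j + 1) = gradStep L f (y j))
    (hy : ∀ j, y (j + 1) = x (j + 1) + (τ j - 1) / τ (j + 1) * (x (j + 1) - x j)) :
    Tendsto (fun j => f (x (j + 1))) atTop (𝓝 (f u)) := by
  set P := fistaPotential L f u x τ
  have hP := antitone_fistaPotential hfund hu hτ hτsq hx hy
  have hbound : ∀ j, f (x (j + 1)) ≤ f u + P 0 / (2 * τ j ^ 2) := fun j => by
    have hτj : 0 < 2 * τ j ^ 2 := by nlinarith [hτ j]
    have hPj : 2 * τ j ^ 2 * (f (x (j + 1)) - f u) ≤ P 0 :=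
      le_trans (le_add_of_nonneg_right (by positivity)) (hP (Nat.zero_le j))
    rw [← sub_le_iff_le_add', le_div_iff₀ hτj]
    linarith
  have hlim : Tendsto (fun j => f u + P 0 / (2 * τ j ^ 2)) atTop (𝓝 (f u)) := by
    simpa using tendsto_const_nhds.add <| tendsto_const_nhds.div_atTop <|
      ((tendsto_pow_atTop two_ne_zero).comp hτ_top).const_mul_atTop two_pos
  exact tendsto_of_tendsto_of_tendsto_of_le_of_le tendsto_const_nhds hlim (fun j => hu _) hbound

end Fista

theorem tendsto_of_antitone_of_frequently_le {V : ℕ → ℝ} {m C : ℝ} (hV : Antitone V)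
    (hm : ∀ k, m ≤ V k) (hfreq : ∃ᶠ k in atTop, V k - m ≤ C * (V k - V (k + 1))) :
    Tendsto V atTop (𝓝 m) := by
  have hlim := tendsto_atTop_ciInf hV ⟨m, Set.forall_mem_range.2 hm⟩
  have hgap := (hlim.sub_const m).sub
    ((hlim.sub (hlim.comp (tendsto_add_atTop_nat 1))).const_mul C)
  have hle : (⨅ k, V k) ≤ m := by
    simpa using le_of_tendsto_of_frequently hgap (hfreq.mono fun k hk => sub_nonpos.2 hk)
  rwa [le_antisymm hle (le_ciInf hm)] at hlim

section Algorithm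

variable {L : ℝ} {f : ℝ → ℝ} {x0 : ℝ} {x y t : ℕ → ℝ}

theorem not_restartAt_of_eq (hL : 0 < L) {k : ℕ} (hx : x (k + 1) = gradStep L f (y k))
    (h : y k = x k) : ¬RestartAt f x y k := by
  unfold RestartAt
  rw [← h, deriv_eq_mul_sub_gradStep hL.ne', ← hx, not_lt]
  nlinarith [mul_nonneg hL.le (sq_nonneg (y k - x (k + 1)))]

namespace IsAlgo1

theorem x_succ (halg : IsAlgo1 L f (fun k => ((k : ℝ) + 2) / 2) x0 x y t) (k : ℕ) :
    x (k + 1) = gradStep L f (y k) :=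
  halg.2.2.1 k

theorem y_zero (halg : IsAlgo1 L f (fun k => ((k : ℝ) + 2) / 2) x0 x y t) : y 0 = x 0 :=
  halg.2.1.trans halg.1.symm

theorem one_le_param (halg : IsAlgo1 L f (fun k => ((k : ℝ) + 2) / 2) x0 x y t) (k : ℕ) :
    1 ≤ t k := by
  obtain ⟨-, -, -, c, -, htc, -⟩ := halg
  rw [htc k]
  linarith [(c k).cast_nonneg (α := ℝ)]

theorem of_restartAt (halg : IsAlgo1 L f (fun k => ((k : ℝ) + 2) / 2) x0 x y t) {k : ℕ}
    (hk : RestartAt f x y k) : y (k + 1) = x (k + 1) := by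
  obtain ⟨-, -, -, c, -, -, hupd⟩ := halg
  exact ((hupd k).2 hk).1

theorem of_not_restartAt (halg : IsAlgo1 L f (fun k => ((k : ℝ) + 2) / 2) x0 x y t) {k : ℕ}
    (hk : ¬RestartAt f x y k) :
    y (k + 1) = x (k + 1) + (t k - 1) / t (k + 1) * (x (k + 1) - x k) ∧
      t (k + 1) = t k + 1 / 2 := by
  obtain ⟨-, -, -, c, -, htc, hupd⟩ := halg
  obtain ⟨hy, hc⟩ := (hupd k).1 (not_lt.1 hk)
  refine ⟨hy, ?_⟩
  rw [htc, htc, hc]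
  push_cast
  ring

theorem exists_momentum (halg : IsAlgo1 L f (fun k => ((k : ℝ) + 2) / 2) x0 x y t) (k : ℕ) :
    ∃ β : ℝ, 0 ≤ β ∧ β ≤ 1 ∧ y (k + 1) = x (k + 1) + β * (x (k + 1) - x k) := by
  by_cases hk : RestartAt f x y k
  · exact ⟨0, le_rfl, zero_le_one, by simp [halg.of_restartAt hk]⟩
  · obtain ⟨hy, ht⟩ := halg.of_not_restartAt hk
    have h1 := halg.one_le_param k
    have h2 : 0 < t (k + 1) := by linarith
    refine ⟨(t k - 1) / t (k + 1), div_nonneg (by linarith) h2.le, ?_, hy⟩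
    rw [div_le_one h2, ht]
    linarith

theorem sub_le_of_restartAt (hL : 0 < L) (hconv : ConvexOn ℝ Set.univ f)
    (hdiff : Differentiable ℝ f) (hlip : ∀ a b : ℝ, |deriv f a - deriv f b| ≤ L * |a - b|)
    (halg : IsAlgo1 L f (fun k => ((k : ℝ) + 2) / 2) x0 x y t) {k : ℕ}
    (hk : RestartAt f x y k) (u : ℝ) : f (x (k + 1)) - f u ≤ L * (x (k + 1) - x k) ^ 2 := by
  obtain _ | j := k
  · exact absurd hk (not_restartAt_of_eq hL (halg.x_succ 0) halg.y_zero)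
  have hprev : ¬RestartAt f x y j := fun hj =>
    not_restartAt_of_eq hL (halg.x_succ _) (halg.of_restartAt hj) hk
  obtain ⟨β, hβ, -, hy⟩ := halg.exists_momentum j
  refine sub_le_mul_sq_of_deriv_mul_deriv_nonpos hL.le hconv hdiff hlip ?_
  unfold RestartAt at hk hprev
  rw [halg.x_succ (j + 1), halg.x_succ j] at hk ⊢
  rw [halg.x_succ j] at hy hprev
  exact deriv_mul_deriv_nonpos_of_restart hL hlip hβ hy (not_lt.1 hprev) hk

theorem tendsto_of_frequently_restartAt (hL : 0 < L) (hconv : ConvexOn ℝ Set.univ f)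
    (hdiff : Differentiable ℝ f) (hlip : ∀ a b : ℝ, |deriv f a - deriv f b| ≤ L * |a - b|)
    (halg : IsAlgo1 L f (fun k => ((k : ℝ) + 2) / 2) x0 x y t) {u : ℝ} (hu : ∀ z, f u ≤ f z)
    (hfreq : ∃ᶠ k in atTop, RestartAt f x y k) :
    Tendsto (fun k => f (x (k + 1))) atTop (𝓝 (f u)) := by
  set V : ℕ → ℝ := fun k => f (x (k + 1)) + L / 2 * (x (k + 1) - x k) ^ 2
  have hVsucc (k : ℕ) : V (k + 1) ≤ f (x (k + 1)) + L / 2 * (y (k + 1) - x (k + 1)) ^ 2 := by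
    simpa only [V, ← halg.x_succ] using
      gradStep_add_sq_le hL hconv hdiff hlip (y (k + 1)) (x (k + 1))
  have hV : Antitone V := antitone_nat_of_succ_le fun k => by
    obtain ⟨β, hβ0, hβ1, hy⟩ := halg.exists_momentum k
    have hβ : (y (k + 1) - x (k + 1)) ^ 2 ≤ (x (k + 1) - x k) ^ 2 := by
      rw [hy, add_sub_cancel_left, mul_pow]
      exact mul_le_of_le_one_left (sq_nonneg _) (pow_le_one₀ hβ0 hβ1)
    exact (hVsucc k).trans (by simp only [V]; gcongr)
  have hxV (k : ℕ) : f (x (k + 1)) ≤ V k := le_add_of_nonneg_right (by positivity)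
  -- at a restart `V k - f u ≤ (L + L / 2) (x (k + 1) - x k)² ≤ 3 (V k - V (k + 1))`
  have hVlim : Tendsto V atTop (𝓝 (f u)) := by
    refine tendsto_of_antitone_of_frequently_le (C := 3) hV (fun k => (hu _).trans (hxV k))
      (hfreq.mono fun k hk => ?_)
    have hdrop := hVsucc k
    rw [halg.of_restartAt hk, sub_self] at hdrop
    have hgap := halg.sub_le_of_restartAt hL hconv hdiff hlip hk u
    simp only [V] at hdrop ⊢
    nlinarith
  exact tendsto_of_tendsto_of_tendsto_of_le_of_le tendsto_const_nhds hVlim (fun k => hu _) hxV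

theorem tendsto_of_eventually_not_restartAt (hL : 0 < L) (hconv : ConvexOn ℝ Set.univ f)
    (hdiff : Differentiable ℝ f) (hlip : ∀ a b : ℝ, |deriv f a - deriv f b| ≤ L * |a - b|)
    (halg : IsAlgo1 L f (fun k => ((k : ℝ) + 2) / 2) x0 x y t) {u : ℝ} (hu : ∀ z, f u ≤ f z)
    (hev : ∀ᶠ k in atTop, ¬RestartAt f x y k) :
    Tendsto (fun k => f (x (k + 1))) atTop (𝓝 (f u)) := by
  obtain ⟨N, hN⟩ := eventually_atTop.1 hev
  have hnr (j : ℕ) := halg.of_not_restartAt (hN (N + j) (Nat.le_add_right N j))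
  have ht (j : ℕ) : t (N + j) = t N + j / 2 := by
    induction j with
    | zero => simp
    | succ j ih => rw [← add_assoc, (hnr j).2, ih]; push_cast; ring
  have htop : Tendsto (fun j => t (N + j)) atTop atTop := by
    simp only [ht]
    exact tendsto_atTop_add_const_left _ _
      (tendsto_natCast_atTop_atTop.atTop_div_const two_pos)
  have hlim := tendsto_of_fista hL.le (gradStep_add_sq_le hL hconv hdiff hlip) hu
    (x := fun j => x (N + j)) (y := fun j => y (N + j))
    (fun j => halg.one_le_param (N + j)) (fun j => by rw [← add_assoc, (hnr j).2]; nlinarith) htop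
    (fun j => halg.x_succ (N + j)) (fun j => (hnr j).1)
  exact (tendsto_add_atTop_iff_nat N).1 (hlim.congr fun j => by congr 2; omega)

end IsAlgo1

end Algorithm

theorem stmt7
    (L : ℝ) (hL : 0 < L) (f : ℝ → ℝ)
    (hconv : ConvexOn ℝ Set.univ f) (hdiff : Differentiable ℝ f)
    (hlip : ∀ a b : ℝ, |deriv f a - deriv f b| ≤ L * |a - b|)
    (x0 : ℝ) (x y t : ℕ → ℝ)
    (halg : IsAlgo1 L f (fun k => ((k : ℝ) + 2) / 2) x0 x y t)
    (xstar : ℝ) (hmin : IsMinOn f Set.univ xstar) :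
    Filter.Tendsto (fun k => f (x k)) Filter.atTop (nhds (f xstar)) := by
  have hu (z : ℝ) : f xstar ≤ f z := hmin (Set.mem_univ z)
  refine (tendsto_add_atTop_iff_nat 1).1 ?_
  by_cases hfreq : ∃ᶠ k in atTop, RestartAt f x y k
  · exact halg.tendsto_of_frequently_restartAt hL hconv hdiff hlip hu hfreq
  · exact halg.tendsto_of_eventually_not_restartAt hL hconv hdiff hlip hu (not_frequently.1 hfreq)
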